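/- arXiv:2111.08898 — 2 statements merged into one kernel-verified Lean document; each statement's English description precedes it below -/
import Mathlib

section
/- Let n ≥ r ≥ 1, let i = (i_1,…,i_r) ∈ I(2n,r), and let l ∈ [1,r] with i_l = n+1. Then β'_{2n+1−l}(A_i, n) = #{k ∈ [1, l−1] : i_k = n+1} − #{k ∈ [1, l−1] : i_k = n} + 1, as integers. -/
open Finset

/-- The matrix `A_i` associated with a tuple `i = (i_1, …, i_r) ∈ I(2n,r)` (here
`1`-based indexing): `a_{k,l} = δ_{k, i_l}` for `l ∈ [1,r]`, `a_{k,l} = 0` for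
`l ∈ [r+1, 2n-r]`, and `a_{k,l} = δ_{2n+1-k, i_{2n+1-l}}` for `l ∈ [2n+1-r, 2n]`. -/
def tupleMat (n r : ℕ) (ii : ℕ → ℕ) : ℕ → ℕ → ℕ := fun k l =>
  if 1 ≤ l ∧ l ≤ r then (if k = ii l then 1 else 0)
  else if 2 * n + 1 - r ≤ l ∧ l ≤ 2 * n then (if 2 * n + 1 - k = ii (2 * n + 1 - l) then 1 else 0)
  else 0

/-! A row sum of `A_i` up to a column in the last block counts the entries of `i` equal to the
row index, plus (after reflecting `j ↦ 2n+1-j`) a tail of entries equal to the mirrored index.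
For rows `n+1` and `n` at columns `2n+1-l` and `2n-l`, the mirrored indices swap, so all
complete counts cancel and only the counts over `[1, l-1]`, together with `i_l = n+1`, survive. -/

theorem Finset.sum_Icc_consecutive {M : Type*} [AddCommMonoid M] (f : ℕ → M) {a b c : ℕ}
    (hab : a ≤ b + 1) (hbc : b ≤ c) :
    (∑ i ∈ Icc a b, f i) + ∑ i ∈ Icc (b + 1) c, f i = ∑ i ∈ Icc a c, f i := by
  simp only [← Ico_add_one_right_eq_Icc]
  exact sum_Ico_consecutive f hab (by omega)

theorem Finset.card_filter_Icc_consecutive (P : ℕ → Prop) [DecidablePred P] {a b c : ℕ}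
    (hab : a ≤ b + 1) (hbc : b ≤ c) :
    #{i ∈ Icc a b | P i} + #{i ∈ Icc (b + 1) c | P i} = #{i ∈ Icc a c | P i} := by
  simp only [card_filter]
  exact sum_Icc_consecutive _ hab hbc

section tupleMat

variable {n r : ℕ} {ii : ℕ → ℕ} {k j : ℕ}

theorem tupleMat_of_le (hj : 1 ≤ j) (hjr : j ≤ r) :
    tupleMat n r ii k j = if ii j = k then 1 else 0 := by
  simp [tupleMat, hj, hjr, eq_comm]

theorem tupleMat_of_lt_of_le (hrj : r < j) (hjn : j ≤ 2 * n - r) : tupleMat n r ii k j = 0 := by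
  simp only [tupleMat]
  rw [if_neg (by omega), if_neg (by omega)]

theorem tupleMat_of_sub_lt (hrn : r ≤ n) (hj : 2 * n - r < j) (hjn : j ≤ 2 * n) :
    tupleMat n r ii k j = if ii (2 * n + 1 - j) = 2 * n + 1 - k then 1 else 0 := by
  simp only [tupleMat, eq_comm (a := 2 * n + 1 - k)]
  rw [if_neg (by omega), if_pos (by omega)]

theorem sum_Icc_tupleMat (hrn : r ≤ n) {p : ℕ} (hp : 2 * n - r ≤ p) (hpn : p ≤ 2 * n) :
    ∑ j ∈ Icc 1 p, tupleMat n r ii k j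
      = #{j ∈ Icc 1 r | ii j = k} + #{m ∈ Icc (2 * n + 1 - p) r | ii m = 2 * n + 1 - k} := by
  have left : ∑ j ∈ Icc 1 r, tupleMat n r ii k j = #{j ∈ Icc 1 r | ii j = k} := by
    rw [card_filter]
    exact sum_congr rfl fun j hj => by
      rw [mem_Icc] at hj
      exact tupleMat_of_le hj.1 hj.2
  have middle : ∑ j ∈ Icc (r + 1) (2 * n - r), tupleMat n r ii k j = 0 :=
    sum_eq_zero fun j hj => by
      rw [mem_Icc] at hj
      exact tupleMat_of_lt_of_le (by omega) hj.2
  have right : ∑ j ∈ Icc (2 * n - r + 1) p, tupleMat n r ii k j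
      = #{m ∈ Icc (2 * n + 1 - p) r | ii m = 2 * n + 1 - k} := by
    rw [card_filter]
    refine sum_nbij' (fun j => 2 * n + 1 - j) (fun m => 2 * n + 1 - m) ?_ ?_ ?_ ?_ ?_ <;>
      intro j hj <;> simp only [mem_Icc] at hj
    · simp only [mem_Icc]; omega
    · simp only [mem_Icc]; omega
    · omega
    · omega
    · exact tupleMat_of_sub_lt hrn (by omega) (by omega)
  rw [← sum_Icc_consecutive _ (by omega) hp,
    ← sum_Icc_consecutive _ (by omega) (show r ≤ 2 * n - r by omega), left, middle, right,
    add_zero]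

end tupleMat

theorem tupleMat_betaPrime_at_np1_general (n r : ℕ) (hrn : r ≤ n)
    (ii : ℕ → ℕ)
    (l : ℕ) (hl1 : 1 ≤ l) (hl2 : l ≤ r) (hil : ii l = n + 1) :
    ((∑ j ∈ Icc 1 (2 * n + 1 - l), (tupleMat n r ii (n + 1) j : ℤ))
        - ∑ j ∈ Icc 1 (2 * n + 1 - l - 1), (tupleMat n r ii n j : ℤ))
      = (((Icc 1 (l - 1)).filter (fun k => ii k = n + 1)).card : ℤ)
        - (((Icc 1 (l - 1)).filter (fun k => ii k = n)).card : ℤ) + 1 := by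
  rw [← Nat.cast_sum, ← Nat.cast_sum, sum_Icc_tupleMat hrn (by omega) (by omega),
    sum_Icc_tupleMat hrn (by omega) (by omega), show 2 * n + 1 - (2 * n + 1 - l) = l by omega,
    show 2 * n + 1 - (2 * n + 1 - l - 1) = l + 1 by omega, show 2 * n + 1 - (n + 1) = n by omega,
    show 2 * n + 1 - n = n + 1 by omega]
  have hl : l - 1 + 1 = l := by omega
  have split_np1 := card_filter_Icc_consecutive (ii · = n + 1) (a := 1) (b := l) (c := r)
    (by omega) hl2
  have split_n := card_filter_Icc_consecutive (ii · = n) (a := 1) (b := l - 1) (c := r)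
    (by omega) (by omega)
  have split_last := card_filter_Icc_consecutive (ii · = n + 1) (a := 1) (b := l - 1) (c := l)
    (by omega) (by omega)
  have last : #{i ∈ Icc l l | ii i = n + 1} = 1 := by
    rw [Icc_self, filter_singleton, if_pos hil, card_singleton]
  rw [hl] at split_n split_last
  rw [last] at split_last
  push_cast
  omega

/-- For `n ≥ r ≥ 1`, `i ∈ I(2n,r)` and `l ∈ [1,r]` with `i_l = n+1`, one has
`β'_{2n+1-l}(A_i, n) = #{k ∈ [1,l-1] : i_k = n+1} - #{k ∈ [1,l-1] : i_k = n} + 1`,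
where `β'_p(A, h) = ∑_{j ≤ p} a_{h+1,j} - ∑_{j < p} a_{h,j}`. -/
theorem tupleMat_betaPrime_at_np1 (n r : ℕ) (hr : 1 ≤ r) (hrn : r ≤ n)
    (ii : ℕ → ℕ) (hii : ∀ k, 1 ≤ k → k ≤ r → 1 ≤ ii k ∧ ii k ≤ 2 * n)
    (l : ℕ) (hl1 : 1 ≤ l) (hl2 : l ≤ r) (hil : ii l = n + 1) :
    ((∑ j ∈ Icc 1 (2 * n + 1 - l), (tupleMat n r ii (n + 1) j : ℤ))
        - ∑ j ∈ Icc 1 (2 * n + 1 - l - 1), (tupleMat n r ii n j : ℤ))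
      = (((Icc 1 (l - 1)).filter (fun k => ii k = n + 1)).card : ℤ)
        - (((Icc 1 (l - 1)).filter (fun k => ii k = n)).card : ℤ) + 1 :=
  tupleMat_betaPrime_at_np1_general n r hrn ii l hl1 hl2 hil
end

section
/- Let n ≥ 2, h ∈ [1, n−1], m ≥ 1, and A = (a_{i,j}) ∈ Ξ_{2n}. Let ν, ν' ∈ Λ(2n,m) satisfy ν_j ≤ a_{h+1,j} and ν'_j ≤ a_{h+1,j} for all j ∈ [1,2n]. If ν' ⊴ ν (dominance order), then A + ∑_{j=1}^{2n} ν_j (E^θ_{h,j} − E^θ_{h+1,j}) ⪯ A + ∑_{j=1}^{2n} ν'_j (E^θ_{h,j} − E^θ_{h+1,j}), and both of these matrices lie in Ξ_{2n}. -/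
open Finset

/-- Entry of the matrix `E^θ_{i,j} = E_{i,j} + E_{2n+1-i,2n+1-j}` (size `2n`,
`1`-based indexing), as an integer. -/
def EthZ (n i j : ℕ) : ℕ → ℕ → ℤ := fun k l =>
  (if k = i ∧ l = j then 1 else 0) + (if k = 2 * n + 1 - i ∧ l = 2 * n + 1 - j then 1 else 0)

/-- Entry of the matrix `A + ∑_{j=1}^{2n} ν_j (E^θ_{h,j} - E^θ_{h+1,j})`. -/
def shiftUpMat (n h : ℕ) (A : ℕ → ℕ → ℕ) (ν : ℕ → ℕ) : ℕ → ℕ → ℤ := fun k l =>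
  (A k l : ℤ) + ∑ j ∈ Icc 1 (2 * n), (ν j : ℤ) * (EthZ n h j k l - EthZ n (h + 1) j k l)

/-!
Only rows `h, h+1` and their mirror rows `2n-h, 2n+1-h` change: `ν` moves up from row `h+1` to
row `h`, and its reversal moves down from row `2n-h` to row `2n+1-h`. Entries stay nonnegative
because `ν_j ≤ a_{h+1,j}` and `a_{2n-h,j} = a_{h+1,2n+1-j}`. A north-east block sum
`∑_{i ≤ u, j ≥ v}` sees the move only when the cut `u` separates two of these rows: for `u = h`
it gains the tail `∑_{j ≥ v} ν_j`, for `u = 2n-h` it loses the head `∑_{j ≤ 2n+1-v} ν_j`.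
Since `ν' ⊴ ν` and both have total `m`, the tails of `ν` are at most those of `ν'` and the heads
at least, which is the claimed inequality.
-/

def Centrosymmetric (N : ℕ) (A : ℕ → ℕ → ℕ) : Prop :=
  ∀ i j, 1 ≤ i → i ≤ N → 1 ≤ j → j ≤ N → A i j = A (N + 1 - i) (N + 1 - j)

lemma sum_Icc_reflect {M : Type*} [AddCommMonoid M] (f : ℕ → M) {v : ℕ} (N : ℕ) (hv : 1 ≤ v) :
    ∑ j ∈ Icc v N, f (N + 1 - j) = ∑ j ∈ Icc 1 (N + 1 - v), f j := by
  apply sum_nbij' (fun j => N + 1 - j) (fun j => N + 1 - j)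
  all_goals intro j hj; simp only [mem_Icc] at hj ⊢
  all_goals omega

lemma sum_Icc_tail_le_of_dominates {N v : ℕ} {ν ν' : ℕ → ℕ}
    (hsum : ∑ j ∈ Icc 1 N, ν j = ∑ j ∈ Icc 1 N, ν' j)
    (hdom : ∀ t, 1 ≤ t → t ≤ N → ∑ j ∈ Icc 1 t, ν' j ≤ ∑ j ∈ Icc 1 t, ν j)
    (hv : v ∈ Icc 1 N) : ∑ j ∈ Icc v N, ν j ≤ ∑ j ∈ Icc v N, ν' j := by
  obtain ⟨hv1, hvN⟩ := mem_Icc.1 hv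
  obtain ⟨t, rfl⟩ : ∃ t, v = t + 1 := ⟨v - 1, by omega⟩
  have hsplit : ∀ μ : ℕ → ℕ,
      ∑ j ∈ Icc 1 t, μ j + ∑ j ∈ Icc (t + 1) N, μ j = ∑ j ∈ Icc 1 N, μ j := by
    intro μ
    have hIoc : Icc 1 = Ioc 0 := funext (Icc_add_one_left_eq_Ioc 0)
    rw [Icc_add_one_left_eq_Ioc, hIoc]
    exact sum_Ioc_consecutive μ (Nat.zero_le t) (by omega)
  have hhead : ∑ j ∈ Icc 1 t, ν' j ≤ ∑ j ∈ Icc 1 t, ν j := by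
    rcases Nat.eq_zero_or_pos t with rfl | ht
    · simp
    · exact hdom t ht (by omega)
  have hν := hsplit ν
  have hν' := hsplit ν'
  omega

lemma EthZ_reflect {n k l : ℕ} (i j : ℕ) (hk : k ∈ Icc 1 (2 * n)) (hl : l ∈ Icc 1 (2 * n)) :
    EthZ n i j (2 * n + 1 - k) (2 * n + 1 - l) = EthZ n i j k l := by
  rw [mem_Icc] at hk hl
  unfold EthZ
  split_ifs <;> omega

lemma shiftUpMat_reflect {n h k l : ℕ} {A : ℕ → ℕ → ℕ} {ν : ℕ → ℕ}
    (hA : Centrosymmetric (2 * n) A)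
    (hk : k ∈ Icc 1 (2 * n)) (hl : l ∈ Icc 1 (2 * n)) :
    shiftUpMat n h A ν (2 * n + 1 - k) (2 * n + 1 - l) = shiftUpMat n h A ν k l := by
  simp only [shiftUpMat, EthZ_reflect _ _ hk hl]
  rw [mem_Icc] at hk hl
  rw [hA k l hk.1 hk.2 hl.1 hl.2]

lemma sum_mul_EthZ (n i k : ℕ) {l : ℕ} (μ : ℕ → ℕ) (hl : l ∈ Icc 1 (2 * n)) :
    ∑ j ∈ Icc 1 (2 * n), (μ j : ℤ) * EthZ n i j k l
      = (if k = i then (μ l : ℤ) else 0)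
        + if k = 2 * n + 1 - i then (μ (2 * n + 1 - l) : ℤ) else 0 := by
  have hterm : ∀ j ∈ Icc 1 (2 * n), (μ j : ℤ) * EthZ n i j k l
      = (if l = j then (if k = i then (μ j : ℤ) else 0) else 0)
        + if 2 * n + 1 - l = j then (if k = 2 * n + 1 - i then (μ j : ℤ) else 0) else 0 := by
    intro j hj
    rw [mem_Icc] at hj hl
    unfold EthZ
    split_ifs <;> omega
  have hl' : 2 * n + 1 - l ∈ Icc 1 (2 * n) := by rw [mem_Icc] at hl ⊢; omega
  rw [sum_congr rfl hterm, sum_add_distrib, sum_ite_eq, sum_ite_eq, if_pos hl, if_pos hl']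

lemma shiftUpMat_apply (n h k : ℕ) {l : ℕ} (A : ℕ → ℕ → ℕ) (μ : ℕ → ℕ) (hl : l ∈ Icc 1 (2 * n)) :
    shiftUpMat n h A μ k l = A k l
      + (if k = h then (μ l : ℤ) else 0) - (if k = h + 1 then (μ l : ℤ) else 0)
      + (if k = 2 * n + 1 - h then (μ (2 * n + 1 - l) : ℤ) else 0)
      - if k = 2 * n - h then (μ (2 * n + 1 - l) : ℤ) else 0 := by
  simp only [shiftUpMat, mul_sub, sum_sub_distrib, sum_mul_EthZ _ _ _ _ hl,
    show 2 * n + 1 - (h + 1) = 2 * n - h by omega]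
  ring

lemma shiftUpMat_nonneg {n h k l : ℕ} {A : ℕ → ℕ → ℕ} {μ : ℕ → ℕ} (hhn : h < n)
    (hA : Centrosymmetric (2 * n) A) (hμ : ∀ j, 1 ≤ j → j ≤ 2 * n → μ j ≤ A (h + 1) j)
    (hl : l ∈ Icc 1 (2 * n)) : 0 ≤ shiftUpMat n h A μ k l := by
  obtain ⟨hl1, hl2⟩ := mem_Icc.1 hl
  have hrow : μ l ≤ A (h + 1) l := hμ l hl1 hl2
  have hrow' : μ (2 * n + 1 - l) ≤ A (2 * n - h) l := by
    rw [hA (2 * n - h) l (by omega) (by omega) hl1 hl2,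
      show 2 * n + 1 - (2 * n - h) = h + 1 by omega]
    exact hμ _ (by omega) (by omega)
  rw [shiftUpMat_apply n h k A μ hl]
  split_ifs <;> subst_vars <;> omega

lemma sum_block_shiftUpMat {n h u v : ℕ} (A : ℕ → ℕ → ℕ) (μ : ℕ → ℕ) (hh : 1 ≤ h) (hhn : h < n)
    (hv : v ∈ Icc 1 (2 * n)) :
    ∑ i ∈ Icc 1 u, ∑ j ∈ Icc v (2 * n), shiftUpMat n h A μ i j
      = ∑ i ∈ Icc 1 u, ∑ j ∈ Icc v (2 * n), (A i j : ℤ)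
        + (if u = h then ∑ j ∈ Icc v (2 * n), (μ j : ℤ) else 0)
        - if u = 2 * n - h then ∑ j ∈ Icc 1 (2 * n + 1 - v), (μ j : ℤ) else 0 := by
  rw [mem_Icc] at hv
  have hcol : ∀ j ∈ Icc v (2 * n), j ∈ Icc 1 (2 * n) := fun j hj => by
    rw [mem_Icc] at hj ⊢; omega
  rw [sum_congr rfl fun i _ => sum_congr rfl fun j hj => shiftUpMat_apply n h i A μ (hcol j hj)]
  simp only [sum_add_distrib, sum_sub_distrib, sum_ite_irrel, sum_const_zero, sum_ite_eq',
    sum_Icc_reflect (fun j => (μ j : ℤ)) (2 * n) hv.1]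
  -- rows `h, h+1` (and `2n-h, 2n+1-h`) lie on the same side of the cut unless `u = h` (`u = 2n-h`)
  split_ifs <;> simp only [mem_Icc] at * <;> omega

theorem shiftUp_prec_of_dominance_general (n : ℕ) (h : ℕ) (hh1 : 1 ≤ h)
    (hh2 : h ≤ n - 1) (m : ℕ) (A : ℕ → ℕ → ℕ)
    (hA : ∀ i j, 1 ≤ i → i ≤ 2 * n → 1 ≤ j → j ≤ 2 * n →
      A i j = A (2 * n + 1 - i) (2 * n + 1 - j))
    (ν ν' : ℕ → ℕ)
    (hνsum : ∑ j ∈ Icc 1 (2 * n), ν j = m) (hν'sum : ∑ j ∈ Icc 1 (2 * n), ν' j = m)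
    (hνle : ∀ j, 1 ≤ j → j ≤ 2 * n → ν j ≤ A (h + 1) j)
    (hν'le : ∀ j, 1 ≤ j → j ≤ 2 * n → ν' j ≤ A (h + 1) j)
    (hdom : ∀ t, 1 ≤ t → t ≤ 2 * n → (∑ j ∈ Icc 1 t, ν' j) ≤ ∑ j ∈ Icc 1 t, ν j) :
    -- the first matrix lies in Ξ_{2n}
    ((∀ k l, 1 ≤ k → k ≤ 2 * n → 1 ≤ l → l ≤ 2 * n →
        0 ≤ shiftUpMat n h A ν k l ∧
        shiftUpMat n h A ν k l = shiftUpMat n h A ν (2 * n + 1 - k) (2 * n + 1 - l))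
    -- the second matrix lies in Ξ_{2n}
    ∧ (∀ k l, 1 ≤ k → k ≤ 2 * n → 1 ≤ l → l ≤ 2 * n →
        0 ≤ shiftUpMat n h A ν' k l ∧
        shiftUpMat n h A ν' k l = shiftUpMat n h A ν' (2 * n + 1 - k) (2 * n + 1 - l))
    -- the preorder relation
    ∧ (∀ u v, 1 ≤ u → u < v → v ≤ 2 * n →
        (∑ i ∈ Icc 1 u, ∑ j ∈ Icc v (2 * n), shiftUpMat n h A ν i j)
          ≤ ∑ i ∈ Icc 1 u, ∑ j ∈ Icc v (2 * n), shiftUpMat n h A ν' i j)) := by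
  have hhn : h < n := by omega
  have mem_Ξ : ∀ μ : ℕ → ℕ, (∀ j, 1 ≤ j → j ≤ 2 * n → μ j ≤ A (h + 1) j) →
      ∀ k l, 1 ≤ k → k ≤ 2 * n → 1 ≤ l → l ≤ 2 * n →
        0 ≤ shiftUpMat n h A μ k l ∧
        shiftUpMat n h A μ k l = shiftUpMat n h A μ (2 * n + 1 - k) (2 * n + 1 - l) :=
    fun μ hμ k l hk1 hk2 hl1 hl2 =>
      ⟨shiftUpMat_nonneg hhn hA hμ (mem_Icc.2 ⟨hl1, hl2⟩),
        (shiftUpMat_reflect hA (mem_Icc.2 ⟨hk1, hk2⟩) (mem_Icc.2 ⟨hl1, hl2⟩)).symm⟩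
  refine ⟨mem_Ξ ν hνle, mem_Ξ ν' hν'le, fun u v _ huv hv2 => ?_⟩
  have hv : v ∈ Icc 1 (2 * n) := mem_Icc.2 ⟨by omega, hv2⟩
  rw [sum_block_shiftUpMat A ν hh1 hhn hv, sum_block_shiftUpMat A ν' hh1 hhn hv]
  have htail : ∑ j ∈ Icc v (2 * n), (ν j : ℤ) ≤ ∑ j ∈ Icc v (2 * n), (ν' j : ℤ) := by
    exact_mod_cast sum_Icc_tail_le_of_dominates (hνsum.trans hν'sum.symm) hdom hv
  have hhead :
      ∑ j ∈ Icc 1 (2 * n + 1 - v), (ν' j : ℤ) ≤ ∑ j ∈ Icc 1 (2 * n + 1 - v), (ν j : ℤ) := by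
    exact_mod_cast hdom _ (by omega) (by omega)
  split_ifs <;> linarith

/-- Let `h ∈ [1, n-1]`, `A ∈ Ξ_{2n}` and `ν, ν' ∈ Λ(2n,m)` with `ν_j, ν'_j ≤ a_{h+1,j}`.
If `ν' ⊴ ν` then `A + ∑_j ν_j (E^θ_{h,j} - E^θ_{h+1,j}) ⪯ A + ∑_j ν'_j (E^θ_{h,j} - E^θ_{h+1,j})`,
and both matrices lie in `Ξ_{2n}` (nonnegative, point-symmetric entries). -/
theorem shiftUp_prec_of_dominance (n : ℕ) (hn : 2 ≤ n) (h : ℕ) (hh1 : 1 ≤ h)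
    (hh2 : h ≤ n - 1) (m : ℕ) (hm : 1 ≤ m) (A : ℕ → ℕ → ℕ)
    (hA : ∀ i j, 1 ≤ i → i ≤ 2 * n → 1 ≤ j → j ≤ 2 * n →
      A i j = A (2 * n + 1 - i) (2 * n + 1 - j))
    (ν ν' : ℕ → ℕ)
    (hνsum : ∑ j ∈ Icc 1 (2 * n), ν j = m) (hν'sum : ∑ j ∈ Icc 1 (2 * n), ν' j = m)
    (hνle : ∀ j, 1 ≤ j → j ≤ 2 * n → ν j ≤ A (h + 1) j)
    (hν'le : ∀ j, 1 ≤ j → j ≤ 2 * n → ν' j ≤ A (h + 1) j)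
    (hdom : ∀ t, 1 ≤ t → t ≤ 2 * n → (∑ j ∈ Icc 1 t, ν' j) ≤ ∑ j ∈ Icc 1 t, ν j) :
    -- the first matrix lies in Ξ_{2n}
    ((∀ k l, 1 ≤ k → k ≤ 2 * n → 1 ≤ l → l ≤ 2 * n →
        0 ≤ shiftUpMat n h A ν k l ∧
        shiftUpMat n h A ν k l = shiftUpMat n h A ν (2 * n + 1 - k) (2 * n + 1 - l))
    -- the second matrix lies in Ξ_{2n}
    ∧ (∀ k l, 1 ≤ k → k ≤ 2 * n → 1 ≤ l → l ≤ 2 * n →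
        0 ≤ shiftUpMat n h A ν' k l ∧
        shiftUpMat n h A ν' k l = shiftUpMat n h A ν' (2 * n + 1 - k) (2 * n + 1 - l))
    -- the preorder relation
    ∧ (∀ u v, 1 ≤ u → u < v → v ≤ 2 * n →
        (∑ i ∈ Icc 1 u, ∑ j ∈ Icc v (2 * n), shiftUpMat n h A ν i j)
          ≤ ∑ i ∈ Icc 1 u, ∑ j ∈ Icc v (2 * n), shiftUpMat n h A ν' i j)) :=
  shiftUp_prec_of_dominance_general n h hh1 hh2 m A hA ν ν' hνsum hν'sum hνle hν'le hdom
end
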